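/- Parallel reduction commutes with substitution in the FMC: for any marked terms M^X and N^X and variable x, the marked reduct of the substitution equals the substitution of the marked reducts, i.e. ({N/x}M)_X = {N_X/x}(M_X). -/
import Mathlib


/-- Terms of the Functional Machine Calculus over a set `A` of locations,
in de Bruijn representation (so terms are automatically identified up to
α-equivalence): nil, variable prefix, push/application on a location,
and pop/abstraction on a location. -/
inductive Tm (A : Type) : Type
  | star : Tm A
  | var  : Nat → Tm A → Tm A
  | push : Tm A → A → Tm A → Tm A
  | pop  : A → Tm A → Tm A

namespace Tm

variable {A : Type}

/-- Lifting of a renaming under a binder. -/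
def liftF (f : Nat → Nat) : Nat → Nat
  | 0 => 0
  | n+1 => f n + 1

/-- Renaming of de Bruijn indices. -/
def rename (f : Nat → Nat) : Tm A → Tm A
  | star => star
  | var n M => var (f n) (rename f M)
  | push N a M => push (rename f N) a (rename f M)
  | pop a M => pop a (rename (liftF f) M)

/-- Capture-avoiding composition `N ; M`. -/
def comp : Tm A → Tm A → Tm A
  | star, P => P
  | var n N, P => var n (comp N P)
  | push Q a N, P => push Q a (comp N P)
  | pop a N, P => pop a (comp N (rename Nat.succ P))

/-- Lifting of a substitution under a binder. -/
def liftS (σ : Nat → Tm A) : Nat → Tm A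
  | 0 => var 0 star
  | n+1 => rename Nat.succ (σ n)

/-- Capture-avoiding simultaneous substitution; note
`{N/x}(x.M) = N ; {N/x}M`. -/
def subst (σ : Nat → Tm A) : Tm A → Tm A
  | star => star
  | var n M => comp (σ n) (subst σ M)
  | push N a M => push (subst σ N) a (subst σ M)
  | pop a M => pop a (subst (liftS σ) M)

/-- Capture-avoiding substitution `{N/x}M` of `N` for the variable
bound immediately outside `M`. -/
def subst1 (N : Tm A) : Tm A → Tm A :=
  subst (fun n => match n with | 0 => N | n+1 => var n star)

end Tm

/-- Head contexts `H ::= {} | [M]a.H | a<x>.H`. -/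
inductive Hd (A : Type) : Type
  | hole : Hd A
  | push : Tm A → A → Hd A → Hd A
  | pop  : A → Hd A → Hd A

namespace Hd

variable {A : Type}

/-- Plugging a term into the hole of a head context (binders of `H` capture). -/
def plug : Hd A → Tm A → Tm A
  | hole, M => M
  | push N a H, M => Tm.push N a (plug H M)
  | pop a H, M => Tm.pop a (plug H M)

/-- The number of binders of a head context. -/
def binders : Hd A → Nat
  | hole => 0
  | push _ _ H => binders H
  | pop _ H => binders H + 1

/-- The locations occurring along the spine of a head context. -/
def locs : Hd A → List A
  | hole => []
  | push _ a H => a :: locs H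
  | pop a H => a :: locs H

end Hd

mutual
/-- Redex-marked FMC terms: a term together with a selection of marked
β-redexes, represented by the `redex` constructor `[N]a✓.H.✓a<x>.M`. -/
inductive MTm (A : Type) : Type
  | star : MTm A
  | var  : Nat → MTm A → MTm A
  | push : MTm A → A → MTm A → MTm A
  | pop  : A → MTm A → MTm A
  | redex : MTm A → A → MHd A → MTm A → MTm A
/-- Head contexts of redex-marked terms. -/
inductive MHd (A : Type) : Type
  | hole : MHd A
  | push : MTm A → A → MHd A → MHd A
  | pop  : A → MHd A → MHd A
end

namespace MHd
variable {A : Type}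
/-- The number of binders of a marked head context. -/
def binders : MHd A → Nat
  | hole => 0
  | push _ _ H => binders H
  | pop _ H => binders H + 1
/-- The locations occurring along the spine of a marked head context. -/
def locs : MHd A → List A
  | hole => []
  | push _ a H => a :: locs H
  | pop a H => a :: locs H
end MHd

mutual
/-- Well-formedness of a marked term: every marked redex is a genuine
β-redex, i.e. its location does not occur in the intervening head context
(in de Bruijn style the freshness condition on binders is automatic). -/
def MTm.WF {A : Type} : MTm A → Prop
  | .star => True
  | .var _ M => M.WF
  | .push N _ M => N.WF ∧ M.WF
  | .pop _ M => M.WF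
  | .redex N a H M => a ∉ H.locs ∧ N.WF ∧ H.WF ∧ M.WF
def MHd.WF {A : Type} : MHd A → Prop
  | .hole => True
  | .push N _ H => N.WF ∧ H.WF
  | .pop _ H => H.WF
end

mutual
/-- The underlying (unmarked) term of a marked term. -/
def MTm.erase {A : Type} : MTm A → Tm A
  | .star => .star
  | .var n M => .var n M.erase
  | .push N a M => .push N.erase a M.erase
  | .pop a M => .pop a M.erase
  | .redex N a H M => .push N.erase a (H.erase.plug (.pop a M.erase))
/-- The underlying head context of a marked head context. -/
def MHd.erase {A : Type} : MHd A → Hd A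
  | .hole => .hole
  | .push N a H => .push N.erase a H.erase
  | .pop a H => .pop a H.erase
end

mutual
/-- The marked reduct `(M^X)_X`: the simultaneous contraction of all
marked redexes. -/
def MTm.reduct {A : Type} : MTm A → Tm A
  | .star => .star
  | .var n M => .var n M.reduct
  | .push N a M => .push N.reduct a M.reduct
  | .pop a M => .pop a M.reduct
  | .redex N _ H M =>
      H.reduct.plug (Tm.subst1 (Tm.rename (· + H.reduct.binders) N.reduct) M.reduct)
/-- The marked reduct of a marked head context. -/
def MHd.reduct {A : Type} : MHd A → Hd A
  | .hole => .hole
  | .push N a H => .push N.reduct a H.reduct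
  | .pop a H => .pop a H.reduct
end

mutual
/-- Renaming of de Bruijn indices in a marked term. -/
def MTm.rename {A : Type} (f : Nat → Nat) : MTm A → MTm A
  | .star => .star
  | .var n M => .var (f n) (M.rename f)
  | .push N a M => .push (N.rename f) a (M.rename f)
  | .pop a M => .pop a (M.rename (Tm.liftF f))
  | .redex N a H M =>
      .redex (N.rename f) a (H.rename f) (M.rename (Tm.liftF^[H.binders + 1] f))
/-- Renaming of de Bruijn indices in a marked head context. -/
def MHd.rename {A : Type} (f : Nat → Nat) : MHd A → MHd A
  | .hole => .hole
  | .push N a H => .push (N.rename f) a (H.rename f)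
  | .pop a H => .pop a (H.rename (Tm.liftF f))
end

/-- Capture-avoiding composition `N ; M` of marked terms. -/
def MTm.comp {A : Type} : MTm A → MTm A → MTm A
  | .star, P => P
  | .var n N, P => .var n (N.comp P)
  | .push Q a N, P => .push Q a (N.comp P)
  | .pop a N, P => .pop a (N.comp (P.rename Nat.succ))
  | .redex N a H M, P => .redex N a H (M.comp (P.rename (· + (H.binders + 1))))

/-- Lifting of a marked substitution under a binder. -/
def MTm.liftS {A : Type} (σ : Nat → MTm A) : Nat → MTm A
  | 0 => .var 0 .star
  | n+1 => (σ n).rename Nat.succ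

mutual
/-- Capture-avoiding simultaneous substitution of marked terms in a
marked term. -/
def MTm.subst {A : Type} (σ : Nat → MTm A) : MTm A → MTm A
  | .star => .star
  | .var n M => (σ n).comp (M.subst σ)
  | .push N a M => .push (N.subst σ) a (M.subst σ)
  | .pop a M => .pop a (M.subst (MTm.liftS σ))
  | .redex N a H M =>
      .redex (N.subst σ) a (H.subst σ) (M.subst (MTm.liftS^[H.binders + 1] σ))
/-- Capture-avoiding substitution in a marked head context. -/
def MHd.subst {A : Type} (σ : Nat → MTm A) : MHd A → MHd A
  | .hole => .hole
  | .push N a H => .push (N.subst σ) a (H.subst σ)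
  | .pop a H => .pop a (H.subst (MTm.liftS σ))
end

/-- Capture-avoiding substitution `{N/x}M` on marked terms. -/
def MTm.subst1 {A : Type} (N : MTm A) : MTm A → MTm A :=
  MTm.subst (fun n => match n with | 0 => N | n+1 => .var n .star)

section Aux
namespace Tm
variable {A : Type}

theorem rename_ext {f g : Nat → Nat} (h : ∀ n, f n = g n) (M : Tm A) :
    rename f M = rename g M := by
  have : f = g := funext h
  rw [this]

theorem subst_ext {σ τ : Nat → Tm A} (h : ∀ n, σ n = τ n) (M : Tm A) :
    subst σ M = subst τ M := by
  have : σ = τ := funext h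
  rw [this]

theorem liftF_comp (f g : Nat → Nat) : liftF f ∘ liftF g = liftF (f ∘ g) := by
  funext n; cases n <;> rfl

theorem rename_rename (f g : Nat → Nat) (M : Tm A) :
    rename f (rename g M) = rename (f ∘ g) M := by
  induction M generalizing f g with
  | star => rfl
  | var n M ih => simp [rename, ih]
  | push N a M ihN ihM => simp [rename, ihN, ihM]
  | pop a M ih => simp [rename, ih, liftF_comp]

theorem rename_id (M : Tm A) : rename (fun n => n) M = M := by
  induction M with
  | star => rfl
  | var n M ih => simp [rename, ih]
  | push N a M ihN ihM => simp [rename, ihN, ihM]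
  | pop a M ih =>
      simp only [rename]
      rw [rename_ext (g := fun n => n) (fun n => by cases n <;> rfl), ih]

theorem rename_succ_rename (f : Nat → Nat) (Q : Tm A) :
    rename (liftF f) (rename Nat.succ Q) = rename Nat.succ (rename f Q) := by
  rw [rename_rename, rename_rename]
  exact rename_ext (fun n => rfl) Q

theorem rename_comp (f : Nat → Nat) (P Q : Tm A) :
    rename f (comp P Q) = comp (rename f P) (rename f Q) := by
  induction P generalizing f Q with
  | star => rfl
  | var n P ih => simp [comp, rename, ih]
  | push N a P ihN ihP => simp [comp, rename, ihP]
  | pop a P ih => simp [comp, rename, ih, rename_succ_rename]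

theorem comp_star (P : Tm A) : comp P star = P := by
  induction P with
  | star => rfl
  | var n P ih => simp [comp, ih]
  | push N a P ihN ihP => simp [comp, ihP]
  | pop a P ih => simp [comp, rename, ih]

theorem comp_assoc (P Q R : Tm A) : comp (comp P Q) R = comp P (comp Q R) := by
  induction P generalizing Q R with
  | star => rfl
  | var n P ih => simp [comp, ih]
  | push N a P ihN ihP => simp [comp, ihP]
  | pop a P ih => simp [comp, ih, rename_comp]

theorem subst_rename (σ : Nat → Tm A) (f : Nat → Nat) (M : Tm A) :
    subst σ (rename f M) = subst (fun n => σ (f n)) M := by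
  induction M generalizing σ f with
  | star => rfl
  | var n M ih => simp [rename, subst, ih]
  | push N a M ihN ihM => simp [rename, subst, ihN, ihM]
  | pop a M ih =>
      simp only [rename, subst, ih]
      exact congrArg _ (subst_ext (fun n => by cases n <;> rfl) M)

theorem rename_subst (f : Nat → Nat) (σ : Nat → Tm A) (M : Tm A) :
    rename f (subst σ M) = subst (fun n => rename f (σ n)) M := by
  induction M generalizing σ f with
  | star => rfl
  | var n M ih => simp [rename, subst, ih, rename_comp]
  | push N a M ihN ihM => simp [rename, subst, ihN, ihM]
  | pop a M ih =>
      simp only [rename, subst, ih]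
      refine congrArg _ (subst_ext (fun n => ?_) M)
      cases n with
      | zero => rfl
      | succ n =>
          show rename (liftF f) (rename Nat.succ (σ n)) = rename Nat.succ (rename f (σ n))
          exact rename_succ_rename f (σ n)

theorem subst_liftS_succ (σ : Nat → Tm A) (Q : Tm A) :
    subst (liftS σ) (rename Nat.succ Q) = rename Nat.succ (subst σ Q) := by
  rw [subst_rename, rename_subst]
  exact subst_ext (fun n => rfl) Q

theorem subst_comp (σ : Nat → Tm A) (P Q : Tm A) :
    subst σ (comp P Q) = comp (subst σ P) (subst σ Q) := by
  induction P generalizing σ Q with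
  | star => rfl
  | var n P ih => simp [comp, subst, ih, comp_assoc]
  | push N a P ihN ihP => simp [comp, subst, ihP]
  | pop a P ih => simp [comp, subst, ih, subst_liftS_succ]

theorem subst_subst (σ τ : Nat → Tm A) (M : Tm A) :
    subst σ (subst τ M) = subst (fun n => subst σ (τ n)) M := by
  induction M generalizing σ τ with
  | star => rfl
  | var n M ih => simp [subst, ih, subst_comp]
  | push N a M ihN ihM => simp [subst, ihN, ihM]
  | pop a M ih =>
      simp only [subst, ih]
      refine congrArg _ (subst_ext (fun n => ?_) M)
      cases n with
      | zero => simp [liftS, subst, comp]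
      | succ n =>
          show subst (liftS σ) (rename Nat.succ (τ n)) = rename Nat.succ (subst σ (τ n))
          exact subst_liftS_succ σ (τ n)

theorem subst_id (M : Tm A) : subst (fun n => var n star) M = M := by
  induction M with
  | star => rfl
  | var n M ih => simp [subst, ih, comp]
  | push N a M ihN ihM => simp [subst, ihN, ihM]
  | pop a M ih =>
      simp only [subst]
      rw [subst_ext (τ := fun n => var n star)
        (fun n => by cases n <;> simp [liftS, rename]), ih]

end Tm
end Aux
section Aux2
namespace Tm
variable {A : Type}

/-- The substitution underlying `subst1`. -/
def sig (X : Tm A) : Nat → Tm A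
  | 0 => X
  | n+1 => var n star

theorem rename_add_zero (M : Tm A) : rename (· + 0) M = M := by
  have := rename_ext (f := fun x => x + 0) (g := fun x => x) (fun n => rfl) M
  rw [this, rename_id]

theorem subst_sig_succ (Y : Tm A) (P : Tm A) :
    subst (fun k => sig Y (Nat.succ k)) P = P := by
  rw [subst_ext (σ := fun k => sig Y (Nat.succ k)) (τ := fun k => var k star) (fun k => rfl) P]
  exact subst_id P

end Tm

namespace Hd
variable {A : Type}

/-- Renaming of a head context. -/
def hrename (f : Nat → Nat) : Hd A → Hd A
  | hole => hole
  | push N a H => push (Tm.rename f N) a (hrename f H)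
  | pop a H => pop a (hrename (Tm.liftF f) H)

/-- Substitution in a head context. -/
def hsubst (σ : Nat → Tm A) : Hd A → Hd A
  | hole => hole
  | push N a H => push (Tm.subst σ N) a (hsubst σ H)
  | pop a H => pop a (hsubst (Tm.liftS σ) H)

theorem binders_hrename (f : Nat → Nat) (H : Hd A) :
    (hrename f H).binders = H.binders := by
  induction H generalizing f with
  | hole => rfl
  | push N a H ih => simp [hrename, binders, ih]
  | pop a H ih => simp [hrename, binders, ih]

theorem binders_hsubst (σ : Nat → Tm A) (H : Hd A) :
    (hsubst σ H).binders = H.binders := by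
  induction H generalizing σ with
  | hole => rfl
  | push N a H ih => simp [hsubst, binders, ih]
  | pop a H ih => simp [hsubst, binders, ih]

theorem rename_plug (f : Nat → Nat) (H : Hd A) (Q : Tm A) :
    Tm.rename f (H.plug Q) = (hrename f H).plug (Tm.rename (Tm.liftF^[H.binders] f) Q) := by
  induction H generalizing f with
  | hole => rfl
  | push N a H ih => simp [plug, hrename, binders, Tm.rename, ih]
  | pop a H ih =>
      simp only [plug, hrename, binders, Tm.rename, ih]
      rw [Function.iterate_succ_apply]

theorem subst_plug (σ : Nat → Tm A) (H : Hd A) (Q : Tm A) :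
    Tm.subst σ (H.plug Q) = (hsubst σ H).plug (Tm.subst (Tm.liftS^[H.binders] σ) Q) := by
  induction H generalizing σ with
  | hole => rfl
  | push N a H ih => simp [plug, hsubst, binders, Tm.subst, ih]
  | pop a H ih =>
      simp only [plug, hsubst, binders, Tm.subst, ih]
      rw [Function.iterate_succ_apply]

theorem comp_plug (H : Hd A) (Q P : Tm A) :
    Tm.comp (H.plug Q) P = H.plug (Tm.comp Q (Tm.rename (· + H.binders) P)) := by
  induction H generalizing Q P with
  | hole =>
      simp only [plug, binders]
      rw [Tm.rename_add_zero]
  | push N a H ih => simp [plug, binders, Tm.comp, ih]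
  | pop a H ih =>
      simp only [plug, binders, Tm.comp, ih, Tm.rename_rename]
      refine congrArg _ (congrArg _ (congrArg _ (Tm.rename_ext (fun n => ?_) P)))
      simp [Function.comp]; omega

end Hd

namespace Tm
variable {A : Type}

theorem subst1_eq (X : Tm A) : subst1 X = subst (sig X) := by
  funext M
  unfold subst1
  exact subst_ext (fun n => by cases n <;> rfl) M

theorem rename_subst1 (g : Nat → Nat) (X Q : Tm A) :
    rename g (subst1 X Q) = subst1 (rename g X) (rename (liftF g) Q) := by
  rw [subst1_eq, subst1_eq, rename_subst, subst_rename]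
  refine subst_ext (fun n => ?_) Q
  cases n <;> simp [sig, liftF, rename]

theorem subst_subst1 (τ : Nat → Tm A) (X Q : Tm A) :
    subst τ (subst1 X Q) = subst1 (subst τ X) (subst (liftS τ) Q) := by
  rw [subst1_eq, subst1_eq, subst_subst, subst_subst]
  refine subst_ext (fun n => ?_) Q
  cases n with
  | zero => simp [sig, liftS, subst, comp_star]
  | succ n =>
      show subst τ (var n star) = subst (sig (subst τ X)) (rename Nat.succ (τ n))
      rw [subst_rename, subst_sig_succ]
      simp [subst, comp_star]

theorem comp_subst1 (X Q P : Tm A) :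
    comp (subst1 X Q) P = subst1 X (comp Q (rename Nat.succ P)) := by
  rw [subst1_eq, subst_comp, subst_rename, subst_sig_succ]

theorem liftS_iter_add (τ : Nat → Tm A) (b : Nat) (n : Nat) :
    liftS^[b] τ (n + b) = rename (· + b) (τ n) := by
  induction b generalizing n with
  | zero =>
      simp only [Function.iterate_zero, id]
      rw [rename_add_zero]
      rfl
  | succ b ih =>
      rw [Function.iterate_succ_apply']
      show rename Nat.succ (liftS^[b] τ (n + b)) = _
      rw [ih, rename_rename]
      exact rename_ext (fun k => by simp [Function.comp]; omega) (τ n)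

theorem liftF_iter_add (f : Nat → Nat) (b : Nat) (n : Nat) :
    liftF^[b] f (n + b) = f n + b := by
  induction b generalizing n with
  | zero => rfl
  | succ b ih =>
      rw [Function.iterate_succ_apply']
      show liftF (liftF^[b] f) (n + b + 1) = f n + (b + 1)
      simp [liftF, ih]
      omega

theorem subst_liftS_iter_rename (τ : Nat → Tm A) (b : Nat) (X : Tm A) :
    subst (liftS^[b] τ) (rename (· + b) X) = rename (· + b) (subst τ X) := by
  rw [subst_rename, rename_subst]
  exact subst_ext (fun n => liftS_iter_add τ b n) X

theorem rename_liftF_iter_rename (f : Nat → Nat) (b : Nat) (X : Tm A) :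
    rename (liftF^[b] f) (rename (· + b) X) = rename (· + b) (rename f X) := by
  rw [rename_rename, rename_rename]
  exact rename_ext (fun n => liftF_iter_add f b n) X

end Tm
end Aux2
section Aux3

theorem MHd.binders_reduct {A : Type} : ∀ (H : MHd A), H.reduct.binders = H.binders
  | .hole => rfl
  | .push N a H => by simp [MHd.reduct, Hd.binders, MHd.binders, MHd.binders_reduct H]
  | .pop a H => by simp [MHd.reduct, Hd.binders, MHd.binders, MHd.binders_reduct H]

theorem MHd.binders_rename {A : Type} : ∀ (H : MHd A) (f : Nat → Nat),
    (H.rename f).binders = H.binders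
  | .hole, _ => rfl
  | .push N a H, f => by simp [MHd.rename, MHd.binders, MHd.binders_rename H f]
  | .pop a H, f => by simp [MHd.rename, MHd.binders, MHd.binders_rename H _]

theorem MHd.binders_subst {A : Type} : ∀ (H : MHd A) (σ : Nat → MTm A),
    (H.subst σ).binders = H.binders
  | .hole, _ => rfl
  | .push N a H, σ => by simp [MHd.subst, MHd.binders, MHd.binders_subst H σ]
  | .pop a H, σ => by simp [MHd.subst, MHd.binders, MHd.binders_subst H _]

mutual
theorem MTm.reduct_rename {A : Type} : ∀ (M : MTm A) (f : Nat → Nat),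
    (M.rename f).reduct = Tm.rename f M.reduct
  | .star, f => rfl
  | .var n M, f => by
      simp [MTm.rename, MTm.reduct, Tm.rename, MTm.reduct_rename M f]
  | .push N a M, f => by
      simp [MTm.rename, MTm.reduct, Tm.rename, MTm.reduct_rename N f, MTm.reduct_rename M f]
  | .pop a M, f => by
      simp [MTm.rename, MTm.reduct, Tm.rename, MTm.reduct_rename M _]
  | .redex N a H M, f => by
      simp only [MTm.rename, MTm.reduct]
      rw [MHd.reduct_rename H f, Hd.binders_hrename, MHd.binders_reduct,
        MTm.reduct_rename N f, MTm.reduct_rename M _,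
        Hd.rename_plug, MHd.binders_reduct, Tm.rename_subst1,
        Tm.rename_liftF_iter_rename, ← Function.iterate_succ_apply' Tm.liftF H.binders f]

theorem MHd.reduct_rename {A : Type} : ∀ (H : MHd A) (f : Nat → Nat),
    (H.rename f).reduct = Hd.hrename f H.reduct
  | .hole, _ => rfl
  | .push N a H, f => by
      simp [MHd.rename, MHd.reduct, Hd.hrename, MTm.reduct_rename N f, MHd.reduct_rename H f]
  | .pop a H, f => by
      simp [MHd.rename, MHd.reduct, Hd.hrename, MHd.reduct_rename H _]
end

theorem MTm.reduct_comp {A : Type} : ∀ (P Q : MTm A),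
    (P.comp Q).reduct = Tm.comp P.reduct Q.reduct
  | .star, Q => rfl
  | .var n P, Q => by
      simp [MTm.comp, MTm.reduct, Tm.comp, MTm.reduct_comp P Q]
  | .push N a P, Q => by
      simp [MTm.comp, MTm.reduct, Tm.comp, MTm.reduct_comp P Q]
  | .pop a P, Q => by
      simp [MTm.comp, MTm.reduct, Tm.comp, MTm.reduct_comp P _, MTm.reduct_rename]
  | .redex N a H M, Q => by
      simp only [MTm.comp, MTm.reduct]
      rw [MTm.reduct_comp M _, MTm.reduct_rename Q _,
        Hd.comp_plug, Tm.comp_subst1, MHd.binders_reduct, Tm.rename_rename]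
      rw [Tm.rename_ext (f := Nat.succ ∘ fun x => x + H.binders)
        (g := fun x => x + (H.binders + 1)) (fun n => by simp [Function.comp]; omega) Q.reduct]

theorem MTm.reduct_liftS {A : Type} (σ : Nat → MTm A) :
    (fun n => (MTm.liftS σ n).reduct) = Tm.liftS (fun n => (σ n).reduct) := by
  funext n
  cases n with
  | zero => rfl
  | succ n =>
      show (MTm.rename Nat.succ (σ n)).reduct = Tm.rename Nat.succ ((σ n).reduct)
      exact MTm.reduct_rename (σ n) Nat.succ

theorem MTm.reduct_liftS_iter {A : Type} (σ : Nat → MTm A) (k : Nat) :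
    (fun n => ((MTm.liftS^[k] σ) n).reduct) = Tm.liftS^[k] (fun n => (σ n).reduct) := by
  induction k generalizing σ with
  | zero => rfl
  | succ k ih =>
      rw [Function.iterate_succ_apply', Function.iterate_succ_apply',
        MTm.reduct_liftS (MTm.liftS^[k] σ), ih σ]

mutual
theorem MTm.reduct_subst {A : Type} : ∀ (M : MTm A) (σ : Nat → MTm A),
    (M.subst σ).reduct = Tm.subst (fun n => (σ n).reduct) M.reduct
  | .star, σ => rfl
  | .var n M, σ => by
      simp [MTm.subst, MTm.reduct, Tm.subst, MTm.reduct_comp, MTm.reduct_subst M σ]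
  | .push N a M, σ => by
      simp [MTm.subst, MTm.reduct, Tm.subst, MTm.reduct_subst N σ, MTm.reduct_subst M σ]
  | .pop a M, σ => by
      simp only [MTm.subst, MTm.reduct, Tm.subst, MTm.reduct_subst M _]
      rw [MTm.reduct_liftS]
  | .redex N a H M, σ => by
      simp only [MTm.subst, MTm.reduct]
      rw [MHd.reduct_subst H σ, Hd.binders_hsubst, MHd.binders_reduct,
        MTm.reduct_subst N σ, MTm.reduct_subst M _,
        MTm.reduct_liftS_iter σ (H.binders + 1),
        Hd.subst_plug, MHd.binders_reduct, Tm.subst_subst1,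
        Tm.subst_liftS_iter_rename,
        ← Function.iterate_succ_apply' Tm.liftS H.binders (fun n => (σ n).reduct)]

theorem MHd.reduct_subst {A : Type} : ∀ (H : MHd A) (σ : Nat → MTm A),
    (H.subst σ).reduct = Hd.hsubst (fun n => (σ n).reduct) H.reduct
  | .hole, _ => rfl
  | .push N a H, σ => by
      simp [MHd.subst, MHd.reduct, Hd.hsubst, MTm.reduct_subst N σ, MHd.reduct_subst H σ]
  | .pop a H, σ => by
      simp only [MHd.subst, MHd.reduct, Hd.hsubst, MHd.reduct_subst H _]
      rw [MTm.reduct_liftS]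
end

end Aux3

/-- Parallel reduction commutes with substitution: the marked reduct of a
substitution is the substitution of the marked reducts,
`({N/x}M)_X = {N_X/x}(M_X)`. -/
theorem fmc_reduct_subst {A : Type} (N M : MTm A) (hN : N.WF) (hM : M.WF) :
    (MTm.subst1 N M).reduct = Tm.subst1 N.reduct M.reduct := by
  show (MTm.subst _ M).reduct = _
  rw [MTm.reduct_subst M _, Tm.subst1_eq]
  refine Tm.subst_ext (fun n => ?_) M.reduct
  cases n with
  | zero => rfl
  | succ n => rfl
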